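/- For n ≥ 2 and 0 ≤ p ≤ r−1: N_r(2^p) = n^p, and for every 0 ≤ i ≤ 2^p, N_r(2^p + i) = n^p + (n−1)·N_r(i). -/

import Mathlib

/-- Whether the `j`-th coordinate of the edge `e` equals the distinguished vertex
(the first vertex of its side, representing `v_{j+1} = 1`). -/
def vcond {n r : ℕ} (e : Fin r → Fin n) (j : ℕ) : Bool :=
  if h : j < r then decide ((e ⟨j, h⟩ : ℕ) = 0) else false

/-- The nested condition `v_{j+1} ∈ e σ₁ (v_{j+2} ∈ e σ₂ (⋯))` determined by a
sequence `σ` over `{∧, ∨}` (where `false` encodes `∧` and `true` encodes `∨`). -/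
def edgeCond {n r : ℕ} (e : Fin r → Fin n) : ℕ → List Bool → Bool
  | j, [] => vcond e j
  | j, false :: s => vcond e j && edgeCond e (j + 1) s
  | j, true :: s => vcond e j || edgeCond e (j + 1) s

/-- `F_r(σ)`: the set of edges of `[n]^r` satisfying the nested condition given by `σ`. -/
def Fset (n r : ℕ) (σ : List Bool) : Finset (Fin r → Fin n) :=
  Finset.univ.filter (fun e => edgeCond e 0 σ = true)

/-- `f_r(σ) = |F_r(σ)|`. -/
def fval (n r : ℕ) (σ : List Bool) : ℕ := (Fset n r σ).card

/-- `Ψ_r`: the sequences over `{∧, ∨}` of length at most `r - 1`. -/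
def PsiSet (r : ℕ) : Finset (List Bool) :=
  (Finset.range r).biUnion (fun m => (Finset.univ : Finset (Fin m → Bool)).image List.ofFn)

/-- The set of values `{f_r(σ) : σ ∈ Σ_r}`, where `f_r(α) = 0` and `f_r(ω) = n ^ r`. -/
def Nvals (n r : ℕ) : Finset ℕ :=
  insert 0 (insert (n ^ r) ((PsiSet r).image (fval n r)))

/-- `N_r(i)`: the `(i+1)`-st smallest element of `{f_r(σ) : σ ∈ Σ_r}`. -/
def Nseq (n r i : ℕ) : ℕ := (Finset.sort (Nvals n r) (· ≤ ·)).getD i 0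

/-!
Peeling off the first coordinate of an edge gives `f_{r+1}() = n^r`, `f_{r+1}(∧σ) = f_r(σ)`
and `f_{r+1}(∨σ) = n^r + (n-1) f_r(σ)`. Reading `∨` as the binary digit 1, `∧` as 0 and
appending a final 1, the sequences of `Ψ_r` correspond bijectively to the integers in
`(0, 2^r)` (`seqIndex`), and `f_r(σ)` becomes `φ(k)` for the function `φ = Nrec n` with
`φ(2^p + i) = n^p + (n-1) φ(i)` for `i < 2^p`.
For `n ≥ 2`, `φ` is strictly increasing, so the sorted value list is `φ(0), …, φ(2^r)` and
`N_r = φ` on `[0, 2^r]`; the theorem is then the recursion of `φ`, extended to `i = 2^p` by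
`n^(p+1) = n^p + (n-1) n^p`.
-/

open Finset

def Nrec (n : ℕ) : ℕ → ℕ
  | 0 => 0
  | i + 1 => n ^ Nat.log 2 (i + 1) + (n - 1) * Nrec n (i + 1 - 2 ^ Nat.log 2 (i + 1))
decreasing_by
  have := Nat.two_pow_pos (Nat.log 2 (i + 1))
  omega

lemma Nrec_two_pow_add_of_lt (n : ℕ) {p i : ℕ} (hi : i < 2 ^ p) :
    Nrec n (2 ^ p + i) = n ^ p + (n - 1) * Nrec n i := by
  have hlog : Nat.log 2 (2 ^ p + i) = p :=
    Nat.log_eq_of_pow_le_of_lt_pow (by omega) (by rw [pow_succ]; omega)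
  obtain ⟨k, hk⟩ : ∃ k, 2 ^ p + i = k + 1 :=
    ⟨2 ^ p + i - 1, by have := Nat.two_pow_pos p; omega⟩
  rw [hk, Nrec, ← hk, hlog, Nat.add_sub_cancel_left]

lemma Nrec_two_pow (n p : ℕ) : Nrec n (2 ^ p) = n ^ p := by
  simpa [Nrec] using Nrec_two_pow_add_of_lt n (Nat.two_pow_pos p)

lemma Nrec_two_pow_add {n p i : ℕ} (hn : 1 ≤ n) (hi : i ≤ 2 ^ p) :
    Nrec n (2 ^ p + i) = n ^ p + (n - 1) * Nrec n i := by
  rcases hi.lt_or_eq with hi | rfl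
  · exact Nrec_two_pow_add_of_lt n hi
  · obtain ⟨m, rfl⟩ : ∃ m, n = m + 1 := ⟨n - 1, by omega⟩
    rw [← two_mul, ← pow_succ', Nrec_two_pow, Nrec_two_pow, Nat.add_sub_cancel]
    ring

lemma strictMonoOn_Nrec_Iic {n : ℕ} (hn : 2 ≤ n) (p : ℕ) :
    StrictMonoOn (Nrec n) (Set.Iic (2 ^ p)) := by
  induction p with
  | zero =>
    intro i hi j hj hij
    simp only [pow_zero, Set.mem_Iic] at hi hj
    obtain ⟨rfl, rfl⟩ : i = 0 ∧ j = 1 := by omega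
    simp [Nrec]
  | succ p ih =>
    have hsplit : Set.Iic (2 ^ (p + 1)) = Set.Iic (2 ^ p) ∪ Set.Icc (2 ^ p) (2 ^ (p + 1)) := by
      ext x; simp only [Set.mem_Iic, Set.mem_union, Set.mem_Icc]; omega
    have hupper : StrictMonoOn (Nrec n) (Set.Icc (2 ^ p) (2 ^ (p + 1))) := by
      intro i hi j hj hij
      simp only [Set.mem_Icc, pow_succ] at hi hj
      obtain ⟨i, rfl⟩ := Nat.exists_eq_add_of_le hi.1
      obtain ⟨j, rfl⟩ := Nat.exists_eq_add_of_le hj.1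
      rw [Nrec_two_pow_add (by omega) (by omega), Nrec_two_pow_add (by omega) (by omega)]
      have := ih (Set.mem_Iic.2 (by omega : i ≤ 2 ^ p)) (Set.mem_Iic.2 (by omega : j ≤ 2 ^ p))
        (by omega)
      gcongr
      omega
    rw [hsplit]
    exact ih.union hupper isGreatest_Iic
      (isLeast_Icc (Nat.pow_le_pow_right (by norm_num) p.le_succ))

lemma strictMono_Nrec {n : ℕ} (hn : 2 ≤ n) : StrictMono (Nrec n) := fun i j hij =>
  strictMonoOn_Nrec_Iic hn j (Set.mem_Iic.2 (by have := j.lt_two_pow_self; omega))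
    (Set.mem_Iic.2 j.lt_two_pow_self.le) hij

lemma card_filter_prod_or {α β : Type*} [Fintype α] [Fintype β]
    (P : α → Prop) (Q : β → Prop) [DecidablePred P] [DecidablePred Q] :
    #{z : α × β | P z.1 ∨ Q z.2} =
      #{a | P a} * Fintype.card β + #{a | ¬P a} * #{b | Q b} := by
  classical
  calc #{z : α × β | P z.1 ∨ Q z.2}
      = #((univ.filter fun z : α × β => P z.1) ∪ univ.filter fun z => ¬P z.1 ∧ Q z.2) := by
        congr 1
        ext z
        simp only [mem_filter, mem_univ, true_and, mem_union]
        tauto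
    _ = #{z : α × β | P z.1} + #{z : α × β | ¬P z.1 ∧ Q z.2} :=
        card_union_of_disjoint (disjoint_filter.2 fun _ _ h h' => (h' : ¬P _ ∧ _).1 h)
    _ = #{a | P a} * Fintype.card β + #{a | ¬P a} * #{b | Q b} := by
        rw [← univ_product_univ, filter_product_left, filter_product (fun a => ¬P a) Q,
          card_product, card_product, card_univ]

section Counting

variable {n r : ℕ}

lemma vcond_cons_zero (x : Fin n) (g : Fin r → Fin n) :
    vcond (Fin.cons x g : Fin (r + 1) → Fin n) 0 = decide ((x : ℕ) = 0) := by
  simp [vcond]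

lemma vcond_cons_succ (x : Fin n) (g : Fin r → Fin n) (j : ℕ) :
    vcond (Fin.cons x g : Fin (r + 1) → Fin n) (j + 1) = vcond g j := by
  unfold vcond
  by_cases hj : j < r
  · rw [dif_pos hj, dif_pos (by omega)]
    rfl
  · rw [dif_neg hj, dif_neg (by omega)]

lemma edgeCond_cons_succ (x : Fin n) (g : Fin r → Fin n) (s : List Bool) (j : ℕ) :
    edgeCond (Fin.cons x g : Fin (r + 1) → Fin n) (j + 1) s = edgeCond g j s := by
  induction s generalizing j with
  | nil => simp [edgeCond, vcond_cons_succ]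
  | cons b s ih => cases b <;> simp [edgeCond, vcond_cons_succ, ih]

lemma card_filter_cons_eq_fval (σ : List Bool) :
    #{z : Fin n × (Fin r → Fin n) | edgeCond (Fin.cons z.1 z.2 : Fin (r + 1) → Fin n) 0 σ}
      = fval n (r + 1) σ :=
  card_equiv (Fin.consEquiv fun _ => Fin n) (by simp [Fset, Fin.consEquiv])

lemma card_filter_val_eq_zero (hn : 0 < n) : #{x : Fin n | (x : ℕ) = 0} = 1 :=
  card_eq_one.2 ⟨⟨0, hn⟩, by ext; simp [Fin.ext_iff]⟩

lemma card_filter_val_ne_zero (hn : 0 < n) : #{x : Fin n | ¬(x : ℕ) = 0} = n - 1 := by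
  have := card_filter_add_card_filter_not (s := univ) (fun x : Fin n => (x : ℕ) = 0)
  rw [card_filter_val_eq_zero hn, card_univ, Fintype.card_fin] at this
  omega

lemma fval_succ_nil (hn : 0 < n) (r : ℕ) : fval n (r + 1) [] = n ^ r := by
  rw [← card_filter_cons_eq_fval]
  simp only [edgeCond, vcond_cons_zero, decide_eq_true_eq]
  rw [← univ_product_univ, filter_product_left fun x : Fin n => (x : ℕ) = 0, card_product,
    card_filter_val_eq_zero hn]
  simp

lemma fval_succ_cons_false (hn : 0 < n) (r : ℕ) (s : List Bool) :
    fval n (r + 1) (false :: s) = fval n r s := by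
  rw [← card_filter_cons_eq_fval]
  simp only [edgeCond, vcond_cons_zero, edgeCond_cons_succ, Bool.and_eq_true, decide_eq_true_eq]
  rw [← univ_product_univ,
    filter_product (fun x : Fin n => (x : ℕ) = 0) fun g => edgeCond g 0 s, card_product,
    card_filter_val_eq_zero hn, one_mul]
  rfl

lemma fval_succ_cons_true (hn : 0 < n) (r : ℕ) (s : List Bool) :
    fval n (r + 1) (true :: s) = n ^ r + (n - 1) * fval n r s := by
  rw [← card_filter_cons_eq_fval]
  simp only [edgeCond, vcond_cons_zero, edgeCond_cons_succ, Bool.or_eq_true, decide_eq_true_eq]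
  rw [card_filter_prod_or (fun x : Fin n => (x : ℕ) = 0) fun g : Fin r → Fin n => edgeCond g 0 s,
    card_filter_val_eq_zero hn, card_filter_val_ne_zero hn]
  simp [fval, Fset]

end Counting

def seqIndex : ℕ → List Bool → ℕ
  | 0, _ => 0
  | r + 1, [] => 2 ^ r
  | r + 1, false :: s => seqIndex r s
  | r + 1, true :: s => 2 ^ r + seqIndex r s

lemma seqIndex_lt_two_pow : ∀ (r : ℕ) (σ : List Bool), seqIndex r σ < 2 ^ r
  | 0, _ => Nat.one_pos
  | r + 1, [] => Nat.pow_lt_pow_right (by norm_num) r.lt_succ_self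
  | r + 1, false :: s =>
    (seqIndex_lt_two_pow r s).trans (Nat.pow_lt_pow_right (by norm_num) r.lt_succ_self)
  | r + 1, true :: s => by have := seqIndex_lt_two_pow r s; rw [seqIndex, pow_succ]; omega

lemma exists_seqIndex_eq {r k : ℕ} (hk₀ : 0 < k) (hk : k < 2 ^ r) :
    ∃ σ : List Bool, σ.length < r ∧ seqIndex r σ = k := by
  induction r generalizing k with
  | zero => omega
  | succ r ih =>
    rw [pow_succ] at hk
    rcases lt_trichotomy k (2 ^ r) with hlt | rfl | hgt
    · obtain ⟨s, hs, rfl⟩ := ih hk₀ hlt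
      exact ⟨false :: s, by simpa using hs, rfl⟩
    · exact ⟨[], by simp, rfl⟩
    · obtain ⟨s, hs, hks⟩ := ih (k := k - 2 ^ r) (by omega) (by omega)
      exact ⟨true :: s, by simpa using hs, by rw [seqIndex, hks]; omega⟩

lemma fval_eq_Nrec_seqIndex {n : ℕ} (hn : 0 < n) :
    ∀ {r : ℕ} {σ : List Bool}, σ.length < r → fval n r σ = Nrec n (seqIndex r σ)
  | r + 1, [], _ => by rw [fval_succ_nil hn, seqIndex, Nrec_two_pow]
  | r + 1, false :: s, hσ => by
    rw [fval_succ_cons_false hn, seqIndex, fval_eq_Nrec_seqIndex hn (by simpa using hσ)]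
  | r + 1, true :: s, hσ => by
    rw [fval_succ_cons_true hn, seqIndex, fval_eq_Nrec_seqIndex hn (by simpa using hσ),
      Nrec_two_pow_add_of_lt n (seqIndex_lt_two_pow r s)]

lemma mem_PsiSet {r : ℕ} {σ : List Bool} : σ ∈ PsiSet r ↔ σ.length < r := by
  simp only [PsiSet, mem_biUnion, mem_range, mem_image, mem_univ, true_and]
  constructor
  · rintro ⟨m, hm, f, rfl⟩
    simpa using hm
  · exact fun h => ⟨σ.length, h, σ.get, List.ofFn_get σ⟩

lemma Nvals_eq_image_Nrec {n : ℕ} (hn : 0 < n) (r : ℕ) :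
    Nvals n r = (range (2 ^ r + 1)).image (Nrec n) := by
  ext a
  simp only [Nvals, mem_insert, mem_image, mem_range, mem_PsiSet]
  constructor
  · rintro (rfl | rfl | ⟨σ, hσ, rfl⟩)
    · exact ⟨0, Nat.succ_pos _, by simp [Nrec]⟩
    · exact ⟨2 ^ r, Nat.lt_succ_self _, Nrec_two_pow n r⟩
    · exact ⟨seqIndex r σ, by have := seqIndex_lt_two_pow r σ; omega,
        (fval_eq_Nrec_seqIndex hn hσ).symm⟩
  · rintro ⟨k, hk, rfl⟩
    rcases Nat.eq_zero_or_pos k with rfl | hk₀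
    · simp [Nrec]
    rcases (Nat.lt_succ_iff.1 hk).lt_or_eq with hk | rfl
    · obtain ⟨σ, hσ, rfl⟩ := exists_seqIndex_eq hk₀ hk
      exact Or.inr (Or.inr ⟨σ, hσ, fval_eq_Nrec_seqIndex hn hσ⟩)
    · exact Or.inr (Or.inl (Nrec_two_pow n r))

lemma Nseq_eq_Nrec {n r i : ℕ} (hn : 2 ≤ n) (hi : i ≤ 2 ^ r) : Nseq n r i = Nrec n i := by
  let f : ℕ ↪ ℕ := ⟨Nrec n, (strictMono_Nrec hn).injective⟩
  have hsort : Finset.sort (Nvals n r) (· ≤ ·) = (List.range (2 ^ r + 1)).map (Nrec n) := by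
    have himage : (range (2 ^ r + 1)).image (Nrec n) = (range (2 ^ r + 1)).map f :=
      (map_eq_image f _).symm
    rw [Nvals_eq_image_Nrec (by omega), himage,
      ← StrictMonoOn.map_finsetSort f _ ((strictMono_Nrec hn).strictMonoOn _), sort_range]
    rfl
  rw [Nseq, hsort, List.getD_eq_getElem _ _ (by simp; omega)]
  simp

theorem stmt4 (n r p i : ℕ) (hn : 2 ≤ n) (hp : p < r) (hi : i ≤ 2 ^ p) :
    Nseq n r (2 ^ p) = n ^ p ∧
    Nseq n r (2 ^ p + i) = n ^ p + (n - 1) * Nseq n r i := by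
  have hpr : 2 ^ (p + 1) ≤ 2 ^ r := Nat.pow_le_pow_right (by norm_num) hp
  rw [pow_succ] at hpr
  rw [Nseq_eq_Nrec hn (by omega), Nseq_eq_Nrec hn (by omega), Nseq_eq_Nrec hn (by omega)]
  exact ⟨Nrec_two_pow n p, Nrec_two_pow_add (by omega) hi⟩
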